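/- In ℓ∞ⁿ (ℝⁿ with the maximum norm), n ≥ 2, let aᵢ be the vector whose j-th coordinate is (−1)^{δ_{ij}} (i.e., −1 in position i and +1 elsewhere), and let b = (1/n)(a₁ + ⋯ + aₙ). Then each aᵢ has sup-norm 1, b lies in the convex hull of {a₁,…,aₙ}, and ‖b − aᵢ‖_∞ = 2(n−1)/n for every i. Consequently the CHD-constant of ℓ∞ⁿ is at least 2(n−1)/n. -/

import Mathlib

/-!
The vectors `aᵢ = 1 - 2eᵢ` are vertices of the unit cube, and their barycentre `b` has every
coordinate equal to `(n - 2)/n`. So `b - aᵢ` has coordinate `2(n - 1)/n` at `i` and `-2/n`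
elsewhere, whence `‖b - aᵢ‖_∞ = 2(n - 1)/n`: the barycentre is that far from every point of
`D = {a₁, …, aₙ}`.
-/

open Set Finset

theorem inv_card_smul_sum_mem_convexHull {R ι E : Type*} [Field R] [LinearOrder R]
    [IsStrictOrderedRing R] [Fintype ι] [Nonempty ι] [AddCommGroup E] [Module R E] (z : ι → E) :
    (Fintype.card ι : R)⁻¹ • ∑ i, z i ∈ convexHull R (range z) := by
  simpa [Finset.centerMass] using
    univ.centerMass_mem_convexHull (w := fun _ => (1 : R)) (fun _ _ => zero_le_one)
      (by simp [Fintype.card_pos]) (fun i _ => mem_range_self i)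

theorem pi_norm_eq_norm_apply {ι : Type*} {π : ι → Type*} [Fintype ι]
    [∀ i, SeminormedAddCommGroup (π i)] {x : ∀ i, π i} {i : ι} (h : ∀ j, ‖x j‖ ≤ ‖x i‖) :
    ‖x‖ = ‖x i‖ :=
  le_antisymm ((pi_norm_le_iff_of_nonneg (norm_nonneg _)).2 h) (norm_le_pi_norm x i)

def signVec {ι : Type*} [DecidableEq ι] (i j : ι) : ℝ := if i = j then -1 else 1

section
variable {ι : Type*} [Fintype ι] [DecidableEq ι]

theorem norm_signVec (i : ι) : ‖signVec i‖ = 1 := by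
  have h : ∀ j, ‖signVec i j‖ = 1 := fun j => by unfold signVec; split_ifs <;> simp
  rw [pi_norm_eq_norm_apply (i := i) (fun j => by rw [h, h]), h]

theorem sum_signVec_apply (j : ι) : ∑ i, signVec i j = Fintype.card ι - 2 := by
  have hpos : 1 ≤ Fintype.card ι := Fintype.card_pos_iff.2 ⟨j⟩
  simp [signVec, Finset.sum_ite, Finset.filter_eq', Finset.filter_ne', Nat.cast_sub hpos]
  ring

theorem inv_card_smul_sum_signVec_apply (j : ι) :
    ((Fintype.card ι : ℝ)⁻¹ • ∑ i, signVec i) j = (Fintype.card ι - 2) / Fintype.card ι := by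
  rw [Pi.smul_apply, Finset.sum_apply, sum_signVec_apply, smul_eq_mul, inv_mul_eq_div]

theorem norm_inv_card_smul_sum_signVec_sub (i : ι) :
    ‖(Fintype.card ι : ℝ)⁻¹ • ∑ k, signVec k - signVec i‖ =
      2 * (Fintype.card ι - 1) / Fintype.card ι := by
  set N : ℝ := (Fintype.card ι : ℝ) with hN_def
  have hN : 1 ≤ N := Nat.one_le_cast.2 (Fintype.card_pos_iff.2 ⟨i⟩)
  have hvalue : ∀ j, (N⁻¹ • ∑ k, signVec k - signVec i : ι → ℝ) j =
      if i = j then 2 * (N - 1) / N else -(2 / N) := by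
    intro j
    rw [Pi.sub_apply, inv_card_smul_sum_signVec_apply, ← hN_def, signVec]
    split_ifs <;> field_simp <;> ring
  have hdiag : 0 ≤ 2 * (N - 1) / N := by
    have : 0 ≤ N - 1 := by linarith
    positivity
  rw [pi_norm_eq_norm_apply (i := i), hvalue, if_pos rfl, Real.norm_of_nonneg hdiag]
  intro j
  rw [hvalue, hvalue, if_pos rfl, Real.norm_of_nonneg hdiag]
  split_ifs with hij
  · rw [Real.norm_of_nonneg hdiag]
  · have h2 : (2 : ℝ) ≤ N := Nat.ofNat_le_cast.2 (Fintype.one_lt_card_iff.2 ⟨i, j, hij⟩)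
    rw [norm_neg, Real.norm_of_nonneg (by positivity)]
    gcongr
    linarith
end

theorem stmt_3 (n : ℕ) (hn : 2 ≤ n)
    (a : Fin n → (Fin n → ℝ))
    (ha : ∀ i j, a i j = if i = j then -1 else 1)
    (b : Fin n → ℝ) (hb : b = (n : ℝ)⁻¹ • ∑ i, a i) :
    (∀ i, ‖a i‖ = 1) ∧
    b ∈ convexHull ℝ (Set.range a) ∧
    (∀ i, ‖b - a i‖ = 2 * (n - 1) / n) ∧
    ∃ D ⊆ Metric.closedBall (0 : Fin n → ℝ) 1,
      ∃ y ∈ convexHull ℝ D, 2 * ((n : ℝ) - 1) / n ≤ Metric.infDist y D := by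
  have : Nonempty (Fin n) := ⟨⟨0, by omega⟩⟩
  obtain rfl : a = signVec := funext fun i => funext (ha i)
  subst hb
  have hdist (i : Fin n) : ‖(n : ℝ)⁻¹ • ∑ k, signVec k - signVec i‖ = 2 * ((n : ℝ) - 1) / n := by
    simpa using norm_inv_card_smul_sum_signVec_sub i
  have hmem : (n : ℝ)⁻¹ • ∑ k, signVec k ∈ convexHull ℝ (range (signVec (ι := Fin n))) := by
    simpa using inv_card_smul_sum_mem_convexHull (signVec (ι := Fin n))
  refine ⟨norm_signVec, hmem, hdist, _, ?_, _, hmem, ?_⟩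
  · rintro _ ⟨i, rfl⟩
    rw [mem_closedBall_zero_iff, norm_signVec]
  · rw [Metric.le_infDist (range_nonempty _)]
    rintro _ ⟨i, rfl⟩
    rw [dist_eq_norm, hdist]
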